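/- arXiv:2403.03782 — 3 statements merged into one kernel-verified Lean document; each statement's English description precedes it below -/
import Mathlib

section
/- For n×n matrices X and Y over a field (or ℝ), the matrix exponential of the 2n×2n block matrix [[X,Y],[0,X]] has the block form [[exp(X), D],[0, exp(X)]] where D = ∫₀¹ exp(sX)·Y·exp((1-s)X) ds equals the directional derivative of the matrix exponential at X in direction Y. -/
/-!
By Duhamel's formula `exp b - exp a = ∫₀¹ exp (s b) (b - a) exp ((1 - s) a) ds`, the map
`t ↦ exp (X + t Y)` is `exp X + t • F t` with `F` continuous and `F 0 = D`, so `D` is its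
derivative at `0`. For the block matrix `A = [[X, Y], [0, X]]`, the function
`Φ t = [[exp (tX), U t], [0, exp (tX)]]` with `U t = (∫₀ᵗ exp (sX) Y exp (-sX) ds) exp (tX)`
solves `Φ' = Φ A`, `Φ 0 = 1`; hence `Φ t = exp (t A)`, and `t = 1` gives the block formula.
-/

open NormedSpace intervalIntegral

theorem hasDerivAt_of_eq_add_sub_smul {E : Type*} [NormedAddCommGroup E] [NormedSpace ℝ E]
    {f F : ℝ → E} {x : ℝ} (hF : ContinuousAt F x) (hf : ∀ t, f t = f x + (t - x) • F t) :
    HasDerivAt f (F x) x := by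
  refine hasDerivAt_iff_tendsto_slope.mpr ((hF.tendsto.mono_left nhdsWithin_le_nhds).congr' ?_)
  filter_upwards [self_mem_nhdsWithin] with t (ht : t ≠ x)
  rw [slope_def_module, hf t, add_sub_cancel_left, smul_smul,
    inv_mul_cancel₀ (sub_ne_zero.mpr ht), one_smul]

section NormedAlgebra

variable {𝔸 : Type*} [NormedRing 𝔸] [NormedAlgebra ℚ 𝔸] [NormedAlgebra ℝ 𝔸]
  [CompleteSpace 𝔸]

theorem exp_smul_mul_exp_smul (a : 𝔸) (s t : ℝ) :
    exp (s • a) * exp (t • a) = exp ((s + t) • a) := by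
  rw [add_smul, exp_add_of_commute (((Commute.refl a).smul_left s).smul_right t)]

theorem exp_neg_smul_mul_exp_smul (a : 𝔸) (t : ℝ) : exp (-(t • a)) * exp (t • a) = 1 := by
  rw [← neg_smul, exp_smul_mul_exp_smul, neg_add_cancel, zero_smul, exp_zero]

theorem exp_sub_exp_eq_integral (a b : 𝔸) :
    exp b - exp a = ∫ s in (0 : ℝ)..1, exp (s • b) * (b - a) * exp ((1 - s) • a) := by
  have hderiv (s : ℝ) : HasDerivAt (fun u : ℝ => exp (u • b) * exp ((1 - u) • a))
      (exp (s • b) * (b - a) * exp ((1 - s) • a)) s := by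
    have hsub : HasDerivAt (fun u : ℝ => 1 - u) (-1) s := by
      simpa using (hasDerivAt_id s).const_sub 1
    have hcomm : Commute a (exp ((1 - s) • a)) := ((Commute.refl a).smul_right _).exp_right
    refine HasDerivAt.congr_deriv ((hasDerivAt_exp_smul_const b s).mul
      ((hasDerivAt_exp_smul_const a (1 - s)).scomp s hsub)) ?_
    simp only [neg_one_smul, mul_neg, ← sub_eq_add_neg, hcomm.eq, mul_sub, sub_mul, mul_assoc]
  have hcont : Continuous fun s : ℝ => exp (s • b) * (b - a) * exp ((1 - s) • a) := by
    fun_prop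
  rw [integral_eq_sub_of_hasDerivAt (fun s _ => hderiv s) (hcont.intervalIntegrable 0 1)]
  simp

theorem hasDerivAt_exp_add_smul (a y : 𝔸) :
    HasDerivAt (fun t : ℝ => exp (a + t • y))
      (∫ s in (0 : ℝ)..1, exp (s • a) * y * exp ((1 - s) • a)) 0 := by
  set F : ℝ → 𝔸 := fun t => ∫ s in (0 : ℝ)..1, exp (s • (a + t • y)) * y * exp ((1 - s) • a)
  have hF : Continuous F :=
    continuous_parametric_intervalIntegral_of_continuous' (by fun_prop) 0 1
  have hduhamel (t : ℝ) : exp (a + t • y) = exp a + t • F t := by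
    rw [← sub_eq_iff_eq_add', exp_sub_exp_eq_integral, add_sub_cancel_left,
      ← intervalIntegral.integral_smul]
    simp only [mul_smul_comm, smul_mul_assoc]
  simpa [F] using hasDerivAt_of_eq_add_sub_smul (f := fun t => exp (a + t • y)) (x := 0)
    hF.continuousAt (fun t => by simpa using hduhamel t)

theorem eq_mul_exp_smul_of_hasDerivAt {Φ : ℝ → 𝔸} {a : 𝔸}
    (hΦ : ∀ t, HasDerivAt Φ (Φ t * a) t) (t : ℝ) : Φ t = Φ 0 * exp (t • a) := by
  have hK (u : ℝ) : HasDerivAt (fun u => Φ u * exp ((-u) • a)) 0 u := by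
    have hcomm : Commute a (exp (-(u • a))) := ((Commute.refl a).smul_right u).neg_right.exp_right
    refine ((hΦ u).mul
      ((hasDerivAt_exp_smul_const a (-u)).scomp u (hasDerivAt_neg u))).congr_deriv ?_
    simp [hcomm.eq, mul_assoc]
  have hconst := is_const_of_deriv_eq_zero (fun u => (hK u).differentiableAt)
    (fun u => (hK u).deriv) t 0
  calc Φ t = Φ t * exp (-(t • a)) * exp (t • a) := by
        rw [mul_assoc, exp_neg_smul_mul_exp_smul, mul_one]
    _ = Φ 0 * exp (t • a) := by simpa using congrArg (· * exp (t • a)) hconst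

end NormedAlgebra

namespace Matrix

variable {m α R : Type*} [Fintype m] [DecidableEq m] [NormedRing α]

/- `Matrix.linftyOpNormedRing` with its uniformity replaced by the product uniformity: the
topologies agree, but only this way does instance search identify the norm topology with the
one `NormedSpace.exp` on `Matrix` is taken in. -/
@[reducible] noncomputable def linftyOpNormedRing' : NormedRing (Matrix m m α) :=
  { Matrix.instRing with
    toNorm := Matrix.linftyOpNormedRing.toNorm
    toMetricSpace :=
      Matrix.linftyOpNormedRing.toMetricSpace.replaceUniformity (U := instUniformSpace m m α) rfl
    dist_eq := Matrix.linftyOpNormedRing.dist_eq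
    norm_mul_le := Matrix.linftyOpNormedRing.norm_mul_le }

attribute [local instance] linftyOpNormedRing'

@[reducible] noncomputable def linftyOpNormedAlgebra' [NormedField R] [NormedAlgebra R α] :
    NormedAlgebra R (Matrix m m α) :=
  { (Matrix.instAlgebra : Algebra R (Matrix m m α)) with
    norm_smul_le := Matrix.linftyOpNormedAlgebra.norm_smul_le }

end Matrix

attribute [local instance] Matrix.linftyOpNormedRing' Matrix.linftyOpNormedAlgebra'

namespace Matrix

variable {m : Type*} [Fintype m] [DecidableEq m]

noncomputable def fromBlocksCLM :
    (Matrix m m ℝ × Matrix m m ℝ) × (Matrix m m ℝ × Matrix m m ℝ) →L[ℝ]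
      Matrix (m ⊕ m) (m ⊕ m) ℝ :=
  LinearMap.toContinuousLinearMap
    { toFun := fun B => fromBlocks B.1.1 B.1.2 B.2.1 B.2.2
      map_add' := fun _ _ => (fromBlocks_add ..).symm
      map_smul' := fun _ _ => (fromBlocks_smul ..).symm }

theorem hasDerivAt_fromBlocks {P Q R S : ℝ → Matrix m m ℝ} {P' Q' R' S' : Matrix m m ℝ}
    {t : ℝ}
    (hP : HasDerivAt P P' t) (hQ : HasDerivAt Q Q' t) (hR : HasDerivAt R R' t)
    (hS : HasDerivAt S S' t) :
    HasDerivAt (fun u => fromBlocks (P u) (Q u) (R u) (S u)) (fromBlocks P' Q' R' S') t :=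
  fromBlocksCLM.hasFDerivAt.comp_hasDerivAt (f := fun u => ((P u, Q u), (R u, S u))) t
    ((hP.prodMk hQ).prodMk (hR.prodMk hS))

theorem intervalIntegral_apply {f : ℝ → Matrix m m ℝ} {a b : ℝ}
    (hf : IntervalIntegrable f MeasureTheory.volume a b) (i j : m) :
    (∫ s in a..b, f s) i j = ∫ s in a..b, f s i j :=
  ((entryLinearMap ℝ ℝ i j).toContinuousLinearMap.intervalIntegral_comp_comm hf).symm

theorem hasDerivAt_apply {f : ℝ → Matrix m m ℝ} {f' : Matrix m m ℝ} {t : ℝ}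
    (hf : HasDerivAt f f' t) (i j : m) : HasDerivAt (fun u => f u i j) (f' i j) t :=
  (entryLinearMap ℝ ℝ i j).toContinuousLinearMap.hasFDerivAt.comp_hasDerivAt t hf

theorem exp_fromBlocks_zero_self (X Y : Matrix m m ℝ) :
    exp (fromBlocks X Y 0 X) =
      fromBlocks (exp X) (∫ s in (0 : ℝ)..1, exp (s • X) * Y * exp ((1 - s) • X)) 0 (exp X) := by
  set C : ℝ → Matrix m m ℝ := fun t => ∫ s in (0 : ℝ)..t, exp (s • X) * Y * exp ((-s) • X)
  have hC (t : ℝ) : HasDerivAt C (exp (t • X) * Y * exp ((-t) • X)) t :=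
    (Continuous.integral_hasStrictDerivAt (by fun_prop) 0 t).hasDerivAt
  set Φ : ℝ → Matrix (m ⊕ m) (m ⊕ m) ℝ :=
    fun t => fromBlocks (exp (t • X)) (C t * exp (t • X)) 0 (exp (t • X))
  have hΦ (t : ℝ) : HasDerivAt Φ (Φ t * fromBlocks X Y 0 X) t := by
    have hE := hasDerivAt_exp_smul_const X t
    refine (hasDerivAt_fromBlocks hE ((hC t).mul hE) (hasDerivAt_const t 0) hE).congr_deriv ?_
    simp [Φ, fromBlocks_multiply, mul_assoc, exp_neg_smul_mul_exp_smul]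
  have hΦ0 : Φ 0 = 1 := by simp [Φ, C, fromBlocks_one]
  have hC1 : (∫ s in (0 : ℝ)..1, exp (s • X) * Y * exp ((-s) • X)) * exp X =
      ∫ s in (0 : ℝ)..1, exp (s • X) * Y * exp ((1 - s) • X) := by
    have hint : IntervalIntegrable (fun s : ℝ => exp (s • X) * Y * exp ((-s) • X))
        MeasureTheory.volume 0 1 := (by fun_prop : Continuous _).intervalIntegrable 0 1
    have := ((ContinuousLinearMap.mul ℝ _).flip (exp X)).intervalIntegral_comp_comm hint
    simp only [ContinuousLinearMap.flip_apply, ContinuousLinearMap.mul_apply'] at this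
    rw [← this]
    refine integral_congr fun s _ => ?_
    rw [sub_eq_neg_add, ← exp_smul_mul_exp_smul, one_smul, mul_assoc]
  have hexp := eq_mul_exp_smul_of_hasDerivAt hΦ 1
  rw [hΦ0, one_mul, one_smul] at hexp
  rw [← hexp, ← hC1]
  simp only [Φ, C, one_smul]

end Matrix

/-- Mathias' theorem: for `n×n` real matrices `X, Y`, the exponential of
the block matrix `[[X,Y],[0,X]]` equals `[[exp X, D],[0, exp X]]`, where
`D = ∫₀¹ exp(sX)·Y·exp((1-s)X) ds` (entrywise integral), and `D` is the directional
derivative of the matrix exponential at `X` in direction `Y`. -/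
theorem mathias_block_exp (n : ℕ) (X Y : Matrix (Fin n) (Fin n) ℝ)
    (D : Matrix (Fin n) (Fin n) ℝ)
    (hD : ∀ i j, D i j =
      ∫ s in (0:ℝ)..1,
        (NormedSpace.exp (s • X) * Y * NormedSpace.exp ((1 - s) • X)) i j) :
    NormedSpace.exp (Matrix.fromBlocks X Y 0 X) =
      Matrix.fromBlocks (NormedSpace.exp X) D 0 (NormedSpace.exp X) ∧
    ∀ i j, HasDerivAt (fun t : ℝ => NormedSpace.exp (X + t • Y) i j) (D i j) 0 := by
  obtain rfl : D = ∫ s in (0 : ℝ)..1, exp (s • X) * Y * exp ((1 - s) • X) := by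
    ext i j
    rw [hD, Matrix.intervalIntegral_apply ((by fun_prop : Continuous _).intervalIntegrable 0 1)]
  exact ⟨Matrix.exp_fromBlocks_zero_self X Y,
    Matrix.hasDerivAt_apply (hasDerivAt_exp_add_smul X Y)⟩
end

section
/- With A₁ = A₂ = 0, B₁ = (1/√2)[[0,1],[1,0]] and B₂ = (1/√2)[[1,0],[0,-1]], the sectional curvature numerator K̂ = (1/8)‖[A₁,A₂] + B₂ᵀB₁ - B₁ᵀB₂‖_F² + (1/4)‖B₁A₂ - B₂A₁‖_F² + (1/2)‖B₁B₂ᵀ - B₂B₁ᵀ‖_F² equals 5/4. -/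
open Matrix

/-! With `A₁ = A₂ = 0` and `B₁`, `B₂` symmetric, both commutator terms of `K̂` are `±[B₁, B₂]`
and the middle term vanishes, so `K̂ = (1/8 + 1/2)‖[B₁, B₂]‖_F²`. For the two scaled reflections
`[B₁, B₂]` is the rotation by a right angle, of squared Frobenius norm `2`. -/

/-- Squared Frobenius norm of a real matrix. -/
def frobSq {m p : ℕ} (M : Matrix (Fin m) (Fin p) ℝ) : ℝ := ∑ i, ∑ j, (M i j) ^ 2

lemma frobSq_zero {m p : ℕ} : frobSq (0 : Matrix (Fin m) (Fin p) ℝ) = 0 := by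
  simp [frobSq]

lemma frobSq_neg {m p : ℕ} (M : Matrix (Fin m) (Fin p) ℝ) : frobSq (-M) = frobSq M := by
  simp [frobSq]

lemma frobSq_of_fin_two (a b c d : ℝ) :
    frobSq !![a, b; c, d] = a ^ 2 + b ^ 2 + c ^ 2 + d ^ 2 := by
  simp [frobSq, Fin.sum_univ_two, add_assoc]

lemma isSymm_of_fin_two {α : Type*} (a b d : α) : (!![a, b; b, d]).IsSymm :=
  IsSymm.ext fun i j => by fin_cases i <;> fin_cases j <;> rfl

/-- The sectional curvature numerator `K̂` of the Stiefel manifold with the canonical metric. -/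
noncomputable def curvatureNumerator {m p : ℕ} (A₁ A₂ : Matrix (Fin p) (Fin p) ℝ)
    (B₁ B₂ : Matrix (Fin m) (Fin p) ℝ) : ℝ :=
  (1 / 8 : ℝ) * frobSq ((A₁ * A₂ - A₂ * A₁) + B₂ᵀ * B₁ - B₁ᵀ * B₂) +
    (1 / 4 : ℝ) * frobSq (B₁ * A₂ - B₂ * A₁) +
    (1 / 2 : ℝ) * frobSq (B₁ * B₂ᵀ - B₂ * B₁ᵀ)

lemma curvatureNumerator_zero_zero_of_isSymm {n : ℕ} {B₁ B₂ : Matrix (Fin n) (Fin n) ℝ}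
    (h₁ : B₁.IsSymm) (h₂ : B₂.IsSymm) :
    curvatureNumerator 0 0 B₁ B₂ = 5 / 8 * frobSq (B₁ * B₂ - B₂ * B₁) := by
  rw [curvatureNumerator, h₁.eq, h₂.eq, ← neg_sub (B₁ * B₂)]
  simp only [mul_zero, sub_self, zero_add, frobSq_zero, frobSq_neg]
  ring

lemma commutator_scaled_reflections :
    ((1 / √2 : ℝ) • !![0, 1; 1, 0]) * ((1 / √2 : ℝ) • !![1, 0; 0, -1]) -
      ((1 / √2 : ℝ) • !![1, 0; 0, -1]) * ((1 / √2 : ℝ) • !![0, 1; 1, 0]) =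
      !![(0 : ℝ), -1; 1, 0] := by
  have half : (1 / √2 : ℝ) * (1 / √2) = 1 / 2 := by
    rw [← sq, div_pow, Real.sq_sqrt zero_le_two, one_pow]
  rw [smul_mul_smul_comm, smul_mul_smul_comm, half, ← smul_sub, mul_fin_two, mul_fin_two]
  ext i j
  fin_cases i <;> fin_cases j <;> norm_num

/-- With `A₁ = A₂ = 0`, `B₁ = (1/√2)[[0,1],[1,0]]`, `B₂ = (1/√2)[[1,0],[0,-1]]`,
the sectional curvature numerator
`K̂ = (1/8)‖[A₁,A₂] + B₂ᵀB₁ - B₁ᵀB₂‖_F² + (1/4)‖B₁A₂ - B₂A₁‖_F² + (1/2)‖B₁B₂ᵀ - B₂B₁ᵀ‖_F²`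
equals `5/4`. -/
theorem curvature_numerator_max (A₁ A₂ B₁ B₂ : Matrix (Fin 2) (Fin 2) ℝ)
    (hA₁ : A₁ = 0) (hA₂ : A₂ = 0)
    (hB₁ : B₁ = (1 / Real.sqrt 2) • !![0, 1; 1, 0])
    (hB₂ : B₂ = (1 / Real.sqrt 2) • !![1, 0; 0, -1]) :
    (1 / 8 : ℝ) * frobSq ((A₁ * A₂ - A₂ * A₁) + B₂ᵀ * B₁ - B₁ᵀ * B₂) +
      (1 / 4 : ℝ) * frobSq (B₁ * A₂ - B₂ * A₁) +
      (1 / 2 : ℝ) * frobSq (B₁ * B₂ᵀ - B₂ * B₁ᵀ) = 5 / 4 := by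
  change curvatureNumerator A₁ A₂ B₁ B₂ = 5 / 4
  have hsymm₁ : B₁.IsSymm := hB₁ ▸ (isSymm_of_fin_two 0 1 0).smul _
  have hsymm₂ : B₂.IsSymm := hB₂ ▸ (isSymm_of_fin_two 1 0 (-1)).smul _
  rw [hA₁, hA₂, curvatureNumerator_zero_zero_of_isSymm hsymm₁ hsymm₂, hB₁, hB₂,
    commutator_scaled_reflections, frobSq_of_fin_two]
  norm_num
end

section
/- The smallest positive root t₁ of f(t) = (t/√2)·cos(t/√2) + sin(t/√2) satisfies t₁ > √(4/5)·π, i.e., t₁ exceeds Rentmeesters' curvature bound √(4/5)π ≈ 2.8099 on the injectivity radius. -/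
open Real

private lemma sin_half_bounds :
    731 / 1536 ≤ Real.sin (1/2) ∧ Real.sin (1/2) ≤ 741 / 1536 := by
  have h := Real.sin_bound (x := 1/2) (by rw [abs_of_pos]; norm_num; norm_num)
  rw [abs_le] at h
  rw [abs_of_pos (by norm_num : (0:ℝ) < 1/2)] at h
  constructor <;> nlinarith [h.1, h.2]

private lemma cos_half_bounds :
    1339 / 1536 ≤ Real.cos (1/2) ∧ Real.cos (1/2) ≤ 1349 / 1536 := by
  have h := Real.cos_bound (x := 1/2) (by rw [abs_of_pos]; norm_num; norm_num)
  rw [abs_le] at h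
  rw [abs_of_pos (by norm_num : (0:ℝ) < 1/2)] at h
  constructor <;> nlinarith [h.1, h.2]

private lemma key_pos : 0 < Real.sin 2 + 2 * Real.cos 2 := by
  have h1 : Real.sin 1 = 2 * Real.sin (1/2) * Real.cos (1/2) := by
    rw [← Real.sin_two_mul]; norm_num
  have h2 : Real.cos 1 = 2 * Real.cos (1/2) ^ 2 - 1 := by
    rw [← Real.cos_two_mul]; norm_num
  have h3 : Real.sin 2 = 2 * Real.sin 1 * Real.cos 1 := by
    rw [← Real.sin_two_mul]; norm_num
  have h4 : Real.cos 2 = 2 * Real.cos 1 ^ 2 - 1 := by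
    rw [← Real.cos_two_mul]; norm_num
  have h2' : Real.cos 1 = 1 - 2 * Real.sin (1/2) ^ 2 := by
    rw [h2]; nlinarith [Real.sin_sq_add_cos_sq (1/2)]
  obtain ⟨s1, s2⟩ := sin_half_bounds
  obtain ⟨c1, c2⟩ := cos_half_bounds
  have hs1lo : (0.8297:ℝ) ≤ Real.sin 1 := by
    rw [h1]; nlinarith [mul_nonneg (sub_nonneg.2 s1) (sub_nonneg.2 c1)]
  have hs1hi : Real.sin 1 ≤ 0.8474 := by
    rw [h1]; nlinarith [mul_nonneg (sub_nonneg.2 s2) (sub_nonneg.2 c2),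
      mul_nonneg (sub_nonneg.2 s1) (sub_nonneg.2 c1)]
  have hc1lo : (0.5345:ℝ) ≤ Real.cos 1 := by
    rw [h2']; nlinarith [mul_nonneg (sub_nonneg.2 s1) (sub_nonneg.2 s2)]
  have hc1hi : Real.cos 1 ≤ 0.5427 := by
    rw [h2]; nlinarith [mul_nonneg (sub_nonneg.2 c1) (sub_nonneg.2 c2)]
  rw [h3, h4]
  nlinarith [mul_nonneg (sub_nonneg.2 hs1lo) (sub_nonneg.2 hc1lo),
    mul_nonneg (sub_nonneg.2 hc1lo) (sub_nonneg.2 hc1hi)]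

private lemma g_pos {x : ℝ} (hx0 : 0 < x) (hx2 : x ≤ 2) :
    0 < x * Real.cos x + Real.sin x := by
  have hpi : (2:ℝ) < π := by linarith [Real.pi_gt_three]
  rcases le_or_gt x (π/2) with h | h
  · have hs : 0 < Real.sin x := Real.sin_pos_of_pos_of_lt_pi hx0 (by linarith)
    have hc : 0 ≤ Real.cos x := Real.cos_nonneg_of_mem_Icc ⟨by linarith, h⟩
    nlinarith
  · have hcx2 : Real.cos 2 ≤ Real.cos x :=
      Real.cos_le_cos_of_nonneg_of_le_pi (by linarith) (by linarith) hx2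
    have hcneg : Real.cos x ≤ 0 :=
      Real.cos_nonpos_of_pi_div_two_le_of_le (le_of_lt h) (by linarith)
    have hsin : Real.sin 2 ≤ Real.sin x := by
      have e1 : Real.sin x = Real.cos (x - π/2) := by
        rw [Real.cos_sub_pi_div_two]
      have e2 : Real.sin 2 = Real.cos (2 - π/2) := by
        rw [Real.cos_sub_pi_div_two]
      rw [e1, e2]
      exact Real.cos_le_cos_of_nonneg_of_le_pi (by linarith) (by linarith)
        (by linarith)
    have : 2 * Real.cos x ≤ x * Real.cos x := by nlinarith
    nlinarith [key_pos]

/-- the smallest positive root `t₁` of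
`f(t) = (t/√2)cos(t/√2) + sin(t/√2)` exceeds Rentmeesters' curvature bound `√(4/5)·π`. -/
theorem smallest_root_exceeds_curvature_bound
    (f : ℝ → ℝ)
    (hf : ∀ t, f t = (t / Real.sqrt 2) * Real.cos (t / Real.sqrt 2) +
        Real.sin (t / Real.sqrt 2))
    (t₁ : ℝ) (ht₁pos : 0 < t₁) (ht₁root : f t₁ = 0)
    (ht₁min : ∀ s, 0 < s → f s = 0 → t₁ ≤ s) :
    t₁ > Real.sqrt (4 / 5) * Real.pi := by
  by_contra hle
  push_neg at hle
  set x := t₁ / Real.sqrt 2 with hx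
  have h2 : (0:ℝ) < Real.sqrt 2 := Real.sqrt_pos.2 (by norm_num)
  have hx0 : 0 < x := div_pos ht₁pos h2
  have hx2 : x ≤ 2 := by
    rw [hx, div_le_iff₀ h2]
    have hs45 : Real.sqrt (4/5) ≤ 0.8945 := by
      rw [show (0.8945:ℝ) = Real.sqrt (0.8945^2) by
        rw [Real.sqrt_sq]; norm_num]
      exact Real.sqrt_le_sqrt (by norm_num)
    have hs2 : (1.41421:ℝ) ≤ Real.sqrt 2 := by
      rw [show (1.41421:ℝ) = Real.sqrt (1.41421^2) by
        rw [Real.sqrt_sq]; norm_num]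
      exact Real.sqrt_le_sqrt (by norm_num)
    have hpi : π < 3.1416 := by linarith [Real.pi_lt_d6]
    have hpi0 : 0 < π := Real.pi_pos
    nlinarith [Real.sqrt_nonneg (4/5:ℝ)]
  have := g_pos hx0 hx2
  rw [hf] at ht₁root
  linarith [ht₁root]
end
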